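/- Let N be a positive integer and let A be a real N×N matrix satisfying properties (P1)–(P3). Then the largest eigenvalue λ(A) of A is strictly negative if and only if there exists a vector m ∈ ℝ_+^N such that −A·m ∈ ℝ_+^N (i.e., every entry of A·m is strictly negative). -/

import Mathlib

open Matrix Finset

lemma aux_rayleigh {N : ℕ} (A : Matrix (Fin N) (Fin N) ℝ) (hA : A.IsHermitian)
    (lam : ℝ) (hl : ∀ i, hA.eigenvalues i ≤ lam) (x : Fin N → ℝ) :
    x ⬝ᵥ (A *ᵥ x) ≤ lam * (x ⬝ᵥ x) := by
  set U : Matrix (Fin N) (Fin N) ℝ := (hA.eigenvectorUnitary : Matrix (Fin N) (Fin N) ℝ) with hU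
  set y : Fin N → ℝ := Uᵀ *ᵥ x with hy
  have hstar : star U = Uᵀ := by
    rw [Matrix.star_eq_conjTranspose, conjTranspose_eq_transpose_of_trivial]
  have hUU : U * Uᵀ = 1 := by
    have := (mem_unitaryGroup_iff.mp hA.eigenvectorUnitary.2)
    rwa [hstar] at this
  have hDiag : A = U * diagonal hA.eigenvalues * Uᵀ := by
    have := hA.spectral_theorem
    rw [Unitary.conjStarAlgAut_apply, hstar] at this
    simpa using this
  have hAx : x ⬝ᵥ (A *ᵥ x) = ∑ i, hA.eigenvalues i * (y i)^2 := by
    conv_lhs => rw [hDiag]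
    rw [← mulVec_mulVec, ← mulVec_mulVec, dotProduct_mulVec, ← mulVec_transpose, hy]
    simp only [dotProduct, mulVec, diagonal_apply, ite_mul, zero_mul, Finset.sum_ite_eq, Finset.mem_univ, if_true]
    exact Finset.sum_congr rfl fun i _ => by ring
  have hxx : x ⬝ᵥ x = ∑ i, (y i)^2 := by
    have hUy : U *ᵥ y = x := by
      rw [hy, mulVec_mulVec, hUU, one_mulVec]
    have : (∑ i, (y i)^2) = y ⬝ᵥ (Uᵀ *ᵥ x) := by
      rw [← hy]; simp [dotProduct, sq]
    rw [this, dotProduct_mulVec, vecMul_transpose, hUy]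
  rw [hAx, hxx, Finset.mul_sum]
  exact Finset.sum_le_sum fun i _ => mul_le_mul_of_nonneg_right (hl i) (sq_nonneg _)

/-- Koike–Uehara, Proposition 3.2 (iii).
For a real `N × N` matrix `A` (with `N > 0`) satisfying (P1)–(P3), the
largest eigenvalue `λ(A)` is strictly negative if and only if there exists a
vector `m` with all entries strictly positive such that all entries of
`A · m` are strictly negative (i.e. `-A·m ∈ ℝ₊^N`). -/
theorem largest_eigenvalue_neg_iff
    (N : ℕ) (hN : 0 < N) (A : Matrix (Fin N) (Fin N) ℝ)
    (hP1 : A.IsHermitian)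
    (hP2 : ∀ i j : Fin N, i ≠ j → 0 ≤ A i j)
    (hP3 : ∀ I : Set (Fin N), I.Nonempty → Iᶜ.Nonempty →
      ∃ i ∈ I, ∃ j ∈ Iᶜ, 0 < A i j) :
    ((⨆ i, hP1.eigenvalues i) < 0) ↔
      ∃ m : Fin N → ℝ, (∀ i, 0 < m i) ∧ (∀ i, A.mulVec m i < 0) := by
  haveI : Nonempty (Fin N) := Fin.pos_iff_nonempty.mp hN
  have hsym : ∀ i j, A j i = A i j := by
    intro i j
    have := congrFun (congrFun hP1.eq i) j
    simpa [Matrix.conjTranspose_apply] using this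
  have hl : ∀ i, hP1.eigenvalues i ≤ ⨆ i, hP1.eigenvalues i :=
    fun i => le_ciSup (Set.Finite.bddAbove (Set.finite_range _)) i
  constructor
  · -- forward: λ < 0 → ∃ m
    intro hneg
    obtain ⟨i0, hi0⟩ := exists_eq_ciSup_of_finite (f := hP1.eigenvalues)
    set lam : ℝ := ⨆ i, hP1.eigenvalues i with hlam
    set v : Fin N → ℝ := ⇑(hP1.eigenvectorBasis i0) with hvdef
    have hv : A *ᵥ v = lam • v := by
      rw [hvdef, hP1.mulVec_eigenvectorBasis i0, hi0]
    have hvne : v ≠ 0 := by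
      have h := hP1.eigenvectorBasis.orthonormal.ne_zero i0
      intro hzero
      apply h
      ext j
      exact congrFun hzero j
    set w : Fin N → ℝ := fun i => |v i| with hwdef
    have hwnn : ∀ i, 0 ≤ w i := fun i => abs_nonneg _
    have hwv : w ⬝ᵥ w = v ⬝ᵥ v := by
      simp only [dotProduct, hwdef, abs_mul_abs_self]
    have hvAv : v ⬝ᵥ (A *ᵥ v) = lam * (v ⬝ᵥ v) := by
      rw [hv, dotProduct_smul, smul_eq_mul]
    have hle : v ⬝ᵥ (A *ᵥ v) ≤ w ⬝ᵥ (A *ᵥ w) := by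
      have e1 : v ⬝ᵥ (A *ᵥ v) = ∑ i, ∑ j, A i j * v i * v j := by
        simp only [dotProduct, mulVec, Finset.mul_sum]
        exact Finset.sum_congr rfl fun i _ => Finset.sum_congr rfl fun j _ => by ring
      have e2 : w ⬝ᵥ (A *ᵥ w) = ∑ i, ∑ j, A i j * w i * w j := by
        simp only [dotProduct, mulVec, Finset.mul_sum]
        exact Finset.sum_congr rfl fun i _ => Finset.sum_congr rfl fun j _ => by ring
      rw [e1, e2]
      refine Finset.sum_le_sum fun i _ => Finset.sum_le_sum fun j _ => ?_
      rcases eq_or_ne i j with rfl | hij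
      · simp only [hwdef, mul_assoc, abs_mul_abs_self]; exact le_refl _
      · have h1 : v i * v j ≤ w i * w j := by
          rw [hwdef, ← abs_mul]; exact le_abs_self _
        calc A i j * v i * v j = A i j * (v i * v j) := by ring
        _ ≤ A i j * (w i * w j) := mul_le_mul_of_nonneg_left h1 (hP2 i j hij)
        _ = A i j * w i * w j := by ring
    have hray : w ⬝ᵥ (A *ᵥ w) ≤ lam * (w ⬝ᵥ w) := aux_rayleigh A hP1 lam hl w
    have heq : w ⬝ᵥ (A *ᵥ w) = lam * (w ⬝ᵥ w) := by
      refine le_antisymm hray ?_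
      rw [hwv, ← hvAv]; exact hle
    -- B = lam • 1 - A is PSD
    set B : Matrix (Fin N) (Fin N) ℝ := lam • (1 : Matrix (Fin N) (Fin N) ℝ) - A with hBdef
    have hBmul : ∀ x : Fin N → ℝ, B *ᵥ x = lam • x - A *ᵥ x := by
      intro x
      rw [hBdef, sub_mulVec, smul_mulVec, one_mulVec]
    have hBpsd : B.PosSemidef := by
      refine Matrix.PosSemidef.of_dotProduct_mulVec_nonneg ?_ ?_
      · show B.conjTranspose = B
        rw [hBdef, conjTranspose_sub, conjTranspose_smul, conjTranspose_one, hP1.eq, star_trivial]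
      · intro x
        rw [star_trivial, hBmul, dotProduct_sub, dotProduct_smul, smul_eq_mul, sub_nonneg]
        exact aux_rayleigh A hP1 lam hl x
    have hBw : B *ᵥ w = 0 := by
      rw [← (hBpsd.dotProduct_mulVec_zero_iff w), star_trivial, hBmul, dotProduct_sub,
        dotProduct_smul, smul_eq_mul, heq, sub_self]
    have hAw : A *ᵥ w = lam • w := by
      have h2 := hBmul w
      rw [hBw] at h2
      exact (sub_eq_zero.mp h2.symm).symm
    have hwne : w ≠ 0 := by
      intro h
      apply hvne
      funext j
      have hj := congrFun h j
      simpa [hwdef] using hj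
    have hwpos : ∀ i, 0 < w i := by
      by_contra hcon
      push_neg at hcon
      obtain ⟨j0, hj0⟩ := hcon
      set I : Set (Fin N) := {i | 0 < w i} with hIdef
      have hIne : I.Nonempty := by
        obtain ⟨i1, hi1⟩ : ∃ i, w i ≠ 0 := by
          by_contra h; push_neg at h; exact hwne (funext h)
        exact ⟨i1, lt_of_le_of_ne (hwnn i1) (Ne.symm hi1)⟩
      have hIcne : Iᶜ.Nonempty := ⟨j0, by simp only [hIdef, Set.mem_compl_iff, Set.mem_setOf_eq]; exact not_lt.mpr hj0⟩
      obtain ⟨i, hiI, j, hjI, hAij⟩ := hP3 I hIne hIcne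
      have hjI' : ¬ (0 < w j) := by
        simpa only [hIdef, Set.mem_compl_iff, Set.mem_setOf_eq] using hjI
      have hiI' : 0 < w i := by
        simpa only [hIdef, Set.mem_setOf_eq] using hiI
      have hwj : w j = 0 := le_antisymm (not_lt.mp hjI') (hwnn j)
      have hAwj : (A *ᵥ w) j = 0 := by
        rw [hAw]; simp [Pi.smul_apply, hwj]
      have hterms : ∀ k ∈ Finset.univ, (0:ℝ) ≤ A j k * w k := by
        intro k _
        rcases eq_or_ne k j with rfl | hk
        · rw [hwj, mul_zero]
        · exact mul_nonneg (hP2 j k (Ne.symm hk)) (hwnn k)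
      have hsum : ∑ k, A j k * w k = 0 := by
        simpa [mulVec, dotProduct] using hAwj
      have hzero := (Finset.sum_eq_zero_iff_of_nonneg hterms).mp hsum i (Finset.mem_univ i)
      have hpos : 0 < A j i * w i := by
        rw [hsym i j]
        exact mul_pos hAij hiI'
      rw [hzero] at hpos
      exact lt_irrefl 0 hpos
    refine ⟨w, hwpos, fun i => ?_⟩
    rw [hAw]
    simpa [Pi.smul_apply] using mul_neg_of_neg_of_pos hneg (hwpos i)
  · -- backward : ∃ m → λ < 0
    rintro ⟨m, hm, hAm⟩
    obtain ⟨i0, hi0⟩ := exists_eq_ciSup_of_finite (f := hP1.eigenvalues)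
    rw [← hi0]
    set v : Fin N → ℝ := ⇑(hP1.eigenvectorBasis i0) with hvdef
    have hv : A *ᵥ v = hP1.eigenvalues i0 • v := hP1.mulVec_eigenvectorBasis i0
    have hvne : v ≠ 0 := by
      have h := hP1.eigenvectorBasis.orthonormal.ne_zero i0
      intro hzero
      apply h
      ext j
      exact congrFun hzero j
    -- negative definiteness
    have negdef : ∀ x : Fin N → ℝ, x ≠ 0 → x ⬝ᵥ (A *ᵥ x) < 0 := by
      intro x hx
      set z : Fin N → ℝ := fun i => x i / m i with hzdef
      have hxz : ∀ i, x i = m i * z i := by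
        intro i
        show x i = m i * (x i / m i)
        rw [← mul_div_assoc]
        exact (mul_div_cancel_left₀ (x i) (hm i).ne').symm
      have e1 : x ⬝ᵥ (A *ᵥ x) = ∑ i, ∑ j, A i j * (m i * z i) * (m j * z j) := by
        simp only [dotProduct, mulVec, Finset.mul_sum]
        exact Finset.sum_congr rfl fun i _ => Finset.sum_congr rfl fun j _ => by
          rw [← hxz i, ← hxz j]; ring
      have step : ∀ i j, A i j * (m i * z i) * (m j * z j) ≤
          A i j * m i * m j * ((z i)^2 + (z j)^2) / 2 := by
        intro i j
        rcases eq_or_ne i j with rfl | hij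
        · apply le_of_eq; ring
        · have h0 : 0 ≤ A i j * m i * m j :=
            mul_nonneg (mul_nonneg (hP2 i j hij) (hm i).le) (hm j).le
          nlinarith [mul_nonneg h0 (sq_nonneg (z i - z j))]
      have hcomm : (∑ i, ∑ j, A i j * m i * m j * (z j)^2 / 2) =
          ∑ i, ∑ j, A i j * m i * m j * (z i)^2 / 2 := by
        rw [Finset.sum_comm]
        exact Finset.sum_congr rfl fun i _ => Finset.sum_congr rfl fun j _ => by
          rw [hsym i j]; ring
      have e2 : (∑ i, ∑ j, A i j * m i * m j * ((z i)^2 + (z j)^2) / 2) =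
          ∑ i, (m i * (z i)^2) * (A *ᵥ m) i := by
        calc (∑ i, ∑ j, A i j * m i * m j * ((z i)^2 + (z j)^2) / 2)
            = ∑ i, ∑ j, (A i j * m i * m j * (z i)^2/2 + A i j * m i * m j * (z j)^2/2) :=
              Finset.sum_congr rfl fun i _ => Finset.sum_congr rfl fun j _ => by ring
          _ = (∑ i, ∑ j, A i j * m i * m j * (z i)^2/2)
              + (∑ i, ∑ j, A i j * m i * m j * (z j)^2/2) := by
              rw [← Finset.sum_add_distrib]
              exact Finset.sum_congr rfl fun i _ => by rw [← Finset.sum_add_distrib]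
          _ = ∑ i, ∑ j, A i j * m i * m j * (z i)^2 := by
              rw [hcomm, ← Finset.sum_add_distrib]
              exact Finset.sum_congr rfl fun i _ => by
                rw [← Finset.sum_add_distrib]
                exact Finset.sum_congr rfl fun j _ => by ring
          _ = ∑ i, (m i * (z i)^2) * (A *ᵥ m) i :=
              Finset.sum_congr rfl fun i _ => by
                simp only [mulVec, dotProduct, Finset.mul_sum]
                exact Finset.sum_congr rfl fun j _ => by ring
      have hfinal : (∑ i, (m i * (z i)^2) * (A *ᵥ m) i) < 0 := by
        obtain ⟨i1, hi1⟩ : ∃ i, x i ≠ 0 := by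
          by_contra h
          push_neg at h
          exact hx (funext h)
        have hz1 : z i1 ≠ 0 := by
          intro h
          apply hi1
          rw [hxz i1, h, mul_zero]
        have : (∑ i, (m i * (z i)^2) * (A *ᵥ m) i) < ∑ _i : Fin N, (0:ℝ) := by
          refine Finset.sum_lt_sum (fun i _ => ?_) ⟨i1, Finset.mem_univ i1, ?_⟩
          · exact mul_nonpos_of_nonneg_of_nonpos
              (mul_nonneg (hm i).le (sq_nonneg _)) (hAm i).le
          · have hz2 : 0 < (z i1)^2 := by
              have h := abs_pos.mpr hz1
              calc (0:ℝ) < |z i1|^2 := pow_pos h 2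
              _ = (z i1)^2 := sq_abs _
            exact mul_neg_of_pos_of_neg (mul_pos (hm i1) hz2) (hAm i1)
        simpa using this
      calc x ⬝ᵥ (A *ᵥ x) = ∑ i, ∑ j, A i j * (m i * z i) * (m j * z j) := e1
      _ ≤ ∑ i, ∑ j, A i j * m i * m j * ((z i)^2 + (z j)^2) / 2 :=
          Finset.sum_le_sum fun i _ => Finset.sum_le_sum fun j _ => step i j
      _ = ∑ i, (m i * (z i)^2) * (A *ᵥ m) i := e2
      _ < 0 := hfinal
    have hvv : 0 < v ⬝ᵥ v := by
      obtain ⟨i1, hi1⟩ : ∃ i, v i ≠ 0 := by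
        by_contra h; push_neg at h; exact hvne (funext h)
      have hlt : (∑ _i : Fin N, (0:ℝ)) < ∑ i, v i * v i :=
        Finset.sum_lt_sum (fun i _ => mul_self_nonneg _)
          ⟨i1, Finset.mem_univ _, by simpa using mul_self_pos.mpr hi1⟩
      simpa [dotProduct] using hlt
    have hlt := negdef v hvne
    rw [hv, dotProduct_smul, smul_eq_mul] at hlt
    by_contra hge
    push_neg at hge
    nlinarith
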